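/- Let Γ be a group. The Birget–Rhodes prefix expansion Γ^Pr is an inverse monoid: for every element s = (A, g), the element s* = (g⁻¹A, g⁻¹) satisfies s s* s = s and s* s s* = s*, and s* is the unique element with these two properties. -/

import Mathlib

/-! Writing `gB` for the left translate `g • B`, one has `(A, g)(g⁻¹A, g⁻¹) = (A, 1)` and
`(g⁻¹A, g⁻¹)(A, g) = (g⁻¹A, 1)`, while `(A, 1)` is a left identity for `(A, g)`; this gives both
regularity equations. For uniqueness, if `s q s = s` and `q s q = q` with `s = (A, g)` and
`q = (B, h)`, the second coordinates force `h = g⁻¹`, the first equation gives `gB ⊆ A` and the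
second gives `g⁻¹A ⊆ B`. -/

open Pointwise

/-- The Birget–Rhodes product `(A, g)(B, h) = (A ∪ gB, gh)` on pairs of a
finite subset of `Γ` and an element of `Γ`. -/
def brMul {Γ : Type*} [Group Γ] [DecidableEq Γ] (p q : Finset Γ × Γ) :
    Finset Γ × Γ :=
  (p.1 ∪ q.1.image (fun b => p.2 * b), p.2 * q.2)

/-- Membership in the Birget–Rhodes prefix expansion `Γ^Pr`: the pair
`(A, g)` satisfies `1 ∈ A` and `g ∈ A`. -/
def brValid {Γ : Type*} [Group Γ] (p : Finset Γ × Γ) : Prop :=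
  (1 : Γ) ∈ p.1 ∧ p.2 ∈ p.1

section

variable {Γ : Type*} [Group Γ] [DecidableEq Γ]

theorem brMul_eq_smul (p q : Finset Γ × Γ) : brMul p q = (p.1 ∪ p.2 • q.1, p.2 * q.2) := rfl

theorem brValid_inv_smul {A : Finset Γ} {g : Γ} (h : brValid (A, g)) : brValid (g⁻¹ • A, g⁻¹) :=
  ⟨by simpa using Finset.smul_mem_smul_finset (a := g⁻¹) h.2,
    by simpa using Finset.smul_mem_smul_finset (a := g⁻¹) h.1⟩

theorem brMul_inv_smul_right (A : Finset Γ) (g : Γ) : brMul (A, g) (g⁻¹ • A, g⁻¹) = (A, 1) := by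
  simp [brMul_eq_smul]

theorem brMul_inv_smul_left (A : Finset Γ) (g : Γ) :
    brMul (g⁻¹ • A, g⁻¹) (A, g) = (g⁻¹ • A, 1) := by
  simp [brMul_eq_smul]

theorem brMul_one_self (A : Finset Γ) (g : Γ) : brMul (A, 1) (A, g) = (A, g) := by
  simp [brMul_eq_smul]

theorem smul_subset_of_brMul_brMul_eq {p q r : Finset Γ × Γ} (h : brMul (brMul p q) r = p) :
    p.2 • q.1 ⊆ p.1 := by
  rw [← congrArg Prod.fst h, brMul_eq_smul, brMul_eq_smul]
  exact Finset.subset_union_right.trans Finset.subset_union_left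

theorem snd_eq_inv_of_brMul_brMul_eq {p q : Finset Γ × Γ} (h : brMul (brMul p q) p = p) :
    q.2 = p.2⁻¹ := by
  have hsnd : p.2 * (q.2 * p.2) = p.2 := mul_assoc p.2 q.2 p.2 ▸ congrArg Prod.snd h
  exact eq_inv_of_mul_eq_one_left (mul_eq_left.mp hsnd)

theorem eq_inv_smul_of_brMul_brMul_eq {p q : Finset Γ × Γ} (hpqp : brMul (brMul p q) p = p)
    (hqpq : brMul (brMul q p) q = q) : q = (p.2⁻¹ • p.1, p.2⁻¹) := by
  have hsnd := snd_eq_inv_of_brMul_brMul_eq hpqp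
  have hsub : q.1 ⊆ p.2⁻¹ • p.1 :=
    Finset.smul_finset_subset_iff.mp (smul_subset_of_brMul_brMul_eq hpqp)
  have hsup : p.2⁻¹ • p.1 ⊆ q.1 := hsnd ▸ smul_subset_of_brMul_brMul_eq hqpq
  exact Prod.ext (hsub.antisymm hsup) hsnd

end

/-- `Γ^Pr` is an inverse monoid: for `s = (A, g)`, the element
`s* = (g⁻¹A, g⁻¹)` satisfies `s s* s = s` and `s* s s* = s*`, and it is the
unique element of `Γ^Pr` with these two properties. -/
theorem stmt9 {Γ : Type*} [Group Γ] [DecidableEq Γ]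
    (A : Finset Γ) (g : Γ) (h1 : (1 : Γ) ∈ A) (hg : g ∈ A) :
    brValid (A.image (fun a => g⁻¹ * a), g⁻¹) ∧
    brMul (brMul (A, g) (A.image (fun a => g⁻¹ * a), g⁻¹)) (A, g) = (A, g) ∧
    brMul (brMul (A.image (fun a => g⁻¹ * a), g⁻¹) (A, g))
        (A.image (fun a => g⁻¹ * a), g⁻¹) = (A.image (fun a => g⁻¹ * a), g⁻¹) ∧
    (∀ q : Finset Γ × Γ, brValid q →
      brMul (brMul (A, g) q) (A, g) = (A, g) →
      brMul (brMul q (A, g)) q = q →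
      q = (A.image (fun a => g⁻¹ * a), g⁻¹)) := by
  rw [show A.image (fun a => g⁻¹ * a) = g⁻¹ • A from rfl]
  refine ⟨brValid_inv_smul ⟨h1, hg⟩, ?_, ?_,
    fun q _ hpqp hqpq ↦ eq_inv_smul_of_brMul_brMul_eq hpqp hqpq⟩
  · rw [brMul_inv_smul_right, brMul_one_self]
  · rw [brMul_inv_smul_left, brMul_one_self]
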